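/- Homogeneous ball: suppose I = s·Id (s > 0) on skew-symmetric matrices, and let γ, p satisfy (γ,γ) = 1, (γ,p) = 0. Then the solution ξ of p = ξ - D·I⁻¹(γ∧ξ)γ with (γ,ξ) = 0 is ξ = s·p/(s+D), and the reduced equations γ̇ = -I⁻¹(γ∧ξ)γ, ṗ = -I⁻¹(γ∧ξ)p take the form γ̇ = p/(s+D), ṗ = -((p,p)/(s+D))γ. Moreover along this flow the matrix ω = (γ∧p)/(s+D) is constant: dω/dt = 0. -/

import Mathlib

open Matrix

/-! Since `γ` is a unit vector orthogonal to `ξ`, `(γ ∧ ξ) γ = -ξ`, so the constraint reads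
`p = (1 + D / s) ξ`. Substituting, `γ̇ = p / (s + D)` and `ṗ ∥ γ`, hence
`d/dt (γ ∧ p) = γ̇ ∧ p + γ ∧ ṗ = 0`. -/

noncomputable def wedge {n : ℕ} (v w : Fin n → ℝ) : Matrix (Fin n) (Fin n) ℝ :=
  vecMulVec v w - vecMulVec w v

section Wedge

variable {n : ℕ} {s D : ℝ} {γ p ξ : Fin n → ℝ}

lemma wedge_mulVec (v w x : Fin n → ℝ) :
    wedge v w *ᵥ x = (w ⬝ᵥ x) • v - (v ⬝ᵥ x) • w := by
  ext i
  simp only [wedge, sub_mulVec, vecMulVec_mulVec, op_smul_eq_smul]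

lemma wedge_self (v : Fin n → ℝ) : wedge v v = 0 :=
  sub_self _

lemma wedge_smul_left (a : ℝ) (v w : Fin n → ℝ) : wedge (a • v) w = a • wedge v w := by
  simp only [wedge, smul_vecMulVec, vecMulVec_smul, smul_sub]

lemma wedge_smul_right (a : ℝ) (v w : Fin n → ℝ) : wedge v (a • w) = a • wedge v w := by
  simp only [wedge, smul_vecMulVec, vecMulVec_smul, smul_sub]

lemma wedge_mulVec_of_unit_of_orthogonal (hγγ : γ ⬝ᵥ γ = 1)
    (hγξ : γ ⬝ᵥ ξ = 0) : wedge γ ξ *ᵥ γ = -ξ := by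
  rw [wedge_mulVec, dotProduct_comm, hγξ, hγγ, zero_smul, one_smul, zero_sub]

lemma wedge_mulVec_of_orthogonal (hγp : γ ⬝ᵥ p = 0) :
    wedge γ ξ *ᵥ p = (ξ ⬝ᵥ p) • γ := by
  rw [wedge_mulVec, hγp, zero_smul, sub_zero]

lemma eq_smul_of_eq_sub_smul_wedge_mulVec (hs : s ≠ 0) (hsD : s + D ≠ 0) (hγγ : γ ⬝ᵥ γ = 1)
    (hγξ : γ ⬝ᵥ ξ = 0) (hpξ : p = ξ - D • ((1 / s) • wedge γ ξ) *ᵥ γ) :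
    ξ = (s / (s + D)) • p := by
  rw [hpξ, smul_mulVec, wedge_mulVec_of_unit_of_orthogonal hγγ hγξ, smul_neg, smul_neg,
    sub_neg_eq_add, smul_smul]
  match_scalars
  field_simp

lemma neg_smul_wedge_mulVec_self (c : ℝ) (hγγ : γ ⬝ᵥ γ = 1) (hγξ : γ ⬝ᵥ ξ = 0) :
    -((c • wedge γ ξ) *ᵥ γ) = c • ξ := by
  rw [smul_mulVec, wedge_mulVec_of_unit_of_orthogonal hγγ hγξ, smul_neg, neg_neg]

lemma neg_smul_wedge_mulVec_of_orthogonal (c : ℝ) (hγp : γ ⬝ᵥ p = 0) :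
    -((c • wedge γ ξ) *ᵥ p) = (-(c * (ξ ⬝ᵥ p))) • γ := by
  rw [smul_mulVec, wedge_mulVec_of_orthogonal hγp, smul_smul, neg_smul]

end Wedge

lemma hasDerivAt_wedge_apply {n : ℕ} {γ p : ℝ → Fin n → ℝ} {γ' p' : Fin n → ℝ} {t : ℝ}
    (hγ : ∀ k, HasDerivAt (fun τ => γ τ k) (γ' k) t)
    (hp : ∀ k, HasDerivAt (fun τ => p τ k) (p' k) t) (i j : Fin n) :
    HasDerivAt (fun τ => wedge (γ τ) (p τ) i j) ((wedge γ' (p t) + wedge (γ t) p') i j) t := by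
  simp only [wedge, Matrix.add_apply, Matrix.sub_apply, vecMulVec_apply]
  exact (((hγ i).mul (hp j)).sub ((hp i).mul (hγ j))).congr_deriv (by ring)

lemma hasDerivAt_wedge_apply_eq_zero {n : ℕ} {γ p : ℝ → Fin n → ℝ} {t a b : ℝ}
    (hγ : ∀ k, HasDerivAt (fun τ => γ τ k) ((a • p t) k) t)
    (hp : ∀ k, HasDerivAt (fun τ => p τ k) ((b • γ t) k) t) (i j : Fin n) :
    HasDerivAt (fun τ => wedge (γ τ) (p τ) i j) 0 t := by
  simpa only [wedge_smul_left, wedge_smul_right, wedge_self, smul_zero, add_zero, Matrix.zero_apply]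
    using hasDerivAt_wedge_apply hγ hp i j

theorem stmt15_general {n : ℕ} (s D : ℝ) (hs : 0 < s) (hD : 0 < D)
    (γ p ξ : ℝ → Fin n → ℝ)
    (hγγ : ∀ t, γ t ⬝ᵥ γ t = 1) (hγp : ∀ t, γ t ⬝ᵥ p t = 0)
    -- ξ solves p = ξ - D·I⁻¹(γ∧ξ)γ with (γ,ξ) = 0, where I⁻¹ = (1/s)·Id
    (hξ : ∀ t, γ t ⬝ᵥ ξ t = 0)
    (hpξ : ∀ t, p t = ξ t - D • ((1 / s) • wedge (γ t) (ξ t)).mulVec (γ t))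
    -- reduced equations γ̇ = -I⁻¹(γ∧ξ)γ, ṗ = -I⁻¹(γ∧ξ)p
    (hγd : ∀ t i, HasDerivAt (fun τ => γ τ i)
      (-((1 / s) • wedge (γ t) (ξ t)).mulVec (γ t) i) t)
    (hpd : ∀ t i, HasDerivAt (fun τ => p τ i)
      (-((1 / s) • wedge (γ t) (ξ t)).mulVec (p t) i) t) :
    -- ξ = s·p/(s+D)
    (∀ t, ξ t = (s / (s + D)) • p t) ∧
    -- the equations take the form γ̇ = p/(s+D), ṗ = -((p,p)/(s+D))γ
    (∀ t, (-((1 / s) • wedge (γ t) (ξ t)).mulVec (γ t)) = (1 / (s + D)) • p t) ∧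
    (∀ t, (-((1 / s) • wedge (γ t) (ξ t)).mulVec (p t)) =
      (-(p t ⬝ᵥ p t) / (s + D)) • γ t) ∧
    -- ω = (γ∧p)/(s+D) is constant along the flow
    (∀ t i j, HasDerivAt (fun τ => ((1 / (s + D)) • wedge (γ τ) (p τ)) i j) 0 t) := by
  have hs0 : s ≠ 0 := hs.ne'
  have hsD : s + D ≠ 0 := (add_pos hs hD).ne'
  have hξp t : ξ t = (s / (s + D)) • p t :=
    eq_smul_of_eq_sub_smul_wedge_mulVec hs0 hsD (hγγ t) (hξ t) (hpξ t)
  have hγeq t : -(((1 / s) • wedge (γ t) (ξ t)) *ᵥ γ t) = (1 / (s + D)) • p t := by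
    rw [neg_smul_wedge_mulVec_self _ (hγγ t) (hξ t), hξp t, smul_smul]
    field_simp
  have hpeq t : -(((1 / s) • wedge (γ t) (ξ t)) *ᵥ p t) = (-(p t ⬝ᵥ p t) / (s + D)) • γ t := by
    rw [neg_smul_wedge_mulVec_of_orthogonal _ (hγp t), hξp t, smul_dotProduct, smul_eq_mul]
    field_simp
  refine ⟨hξp, hγeq, hpeq, fun t i j => ?_⟩
  have hω := hasDerivAt_wedge_apply_eq_zero (a := 1 / (s + D)) (b := -(p t ⬝ᵥ p t) / (s + D))
    (fun k => by rw [← hγeq t]; exact hγd t k) (fun k => by rw [← hpeq t]; exact hpd t k) i j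
  simpa only [Matrix.smul_apply, smul_eq_mul, mul_zero] using hω.const_mul (1 / (s + D))

theorem stmt15 {n : ℕ} (hn : 2 ≤ n) (s D : ℝ) (hs : 0 < s) (hD : 0 < D)
    (γ p ξ : ℝ → Fin n → ℝ)
    (hγγ : ∀ t, γ t ⬝ᵥ γ t = 1) (hγp : ∀ t, γ t ⬝ᵥ p t = 0)
    -- ξ solves p = ξ - D·I⁻¹(γ∧ξ)γ with (γ,ξ) = 0, where I⁻¹ = (1/s)·Id
    (hξ : ∀ t, γ t ⬝ᵥ ξ t = 0)
    (hpξ : ∀ t, p t = ξ t - D • ((1 / s) • wedge (γ t) (ξ t)).mulVec (γ t))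
    -- reduced equations γ̇ = -I⁻¹(γ∧ξ)γ, ṗ = -I⁻¹(γ∧ξ)p
    (hγd : ∀ t i, HasDerivAt (fun τ => γ τ i)
      (-((1 / s) • wedge (γ t) (ξ t)).mulVec (γ t) i) t)
    (hpd : ∀ t i, HasDerivAt (fun τ => p τ i)
      (-((1 / s) • wedge (γ t) (ξ t)).mulVec (p t) i) t) :
    -- ξ = s·p/(s+D)
    (∀ t, ξ t = (s / (s + D)) • p t) ∧
    -- the equations take the form γ̇ = p/(s+D), ṗ = -((p,p)/(s+D))γ
    (∀ t, (-((1 / s) • wedge (γ t) (ξ t)).mulVec (γ t)) = (1 / (s + D)) • p t) ∧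
    (∀ t, (-((1 / s) • wedge (γ t) (ξ t)).mulVec (p t)) =
      (-(p t ⬝ᵥ p t) / (s + D)) • γ t) ∧
    -- ω = (γ∧p)/(s+D) is constant along the flow
    (∀ t i j, HasDerivAt (fun τ => ((1 / (s + D)) • wedge (γ τ) (p τ)) i j) 0 t) :=
  stmt15_general s D hs hD γ p ξ hγγ hγp hξ hpξ hγd hpd
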